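/- arXiv:1611.08926 — 10 statements merged into one kernel-verified Lean document; each statement's English description precedes it below -/
import Mathlib

section
/- Let 𝔤 be a quadratic Lie algebra and D a generalized connection on 𝔤. Then the torsion T_D(e₁,e₂,e₃) = ⟨D_{e₁}e₂ − D_{e₂}e₁ − [e₁,e₂], e₃⟩ + ⟨D_{e₃}e₁, e₂⟩ is a totally skew-symmetric (alternating) trilinear form on 𝔤. -/
/-- On a quadratic Lie algebra `𝔤` (a Courant algebroid over a point),
the torsion `T_D(e₁,e₂,e₃) = ⟨D_{e₁}e₂ − D_{e₂}e₁ − [e₁,e₂], e₃⟩ + ⟨D_{e₃}e₁, e₂⟩` of a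
generalized connection `D` is a totally skew-symmetric (alternating) trilinear form. -/
theorem statement_0
    {𝔤 : Type*} [LieRing 𝔤] [LieAlgebra ℝ 𝔤] [FiniteDimensional ℝ 𝔤]
    (B : 𝔤 →ₗ[ℝ] 𝔤 →ₗ[ℝ] ℝ)
    (hB_symm : ∀ x y, B x y = B y x)
    (hB_nondeg : ∀ x, (∀ y, B x y = 0) → x = 0)
    (hB_inv : ∀ x y z, B ⁅x, y⁆ z = B x ⁅y, z⁆)
    (D : 𝔤 →ₗ[ℝ] 𝔤 →ₗ[ℝ] 𝔤)
    (hD_skew : ∀ e a b, B (D e a) b + B a (D e b) = 0)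
    (T : 𝔤 → 𝔤 → 𝔤 → ℝ)
    (hT : ∀ e₁ e₂ e₃, T e₁ e₂ e₃ =
      B (D e₁ e₂ - D e₂ e₁ - ⁅e₁, e₂⁆) e₃ + B (D e₃ e₁) e₂) :
    (∀ e₁ e₂ e₃, T e₂ e₁ e₃ = - T e₁ e₂ e₃) ∧
    (∀ e₁ e₂ e₃, T e₁ e₃ e₂ = - T e₁ e₂ e₃) ∧
    (∀ e₁ e₂ e₃, T e₃ e₂ e₁ = - T e₁ e₂ e₃) := by
  have h12 : ∀ e₁ e₂ e₃, T e₂ e₁ e₃ = - T e₁ e₂ e₃ := by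
    intro e₁ e₂ e₃
    rw [hT, hT]
    simp only [map_sub, LinearMap.sub_apply]
    have h1 : B ⁅e₁, e₂⁆ e₃ = - B ⁅e₂, e₁⁆ e₃ := by
      rw [← lie_skew e₂ e₁, map_neg, LinearMap.neg_apply, neg_neg]
    linear_combination - h1 + hD_skew e₃ e₁ e₂ + hB_symm (D e₃ e₂) e₁
  have h23 : ∀ e₁ e₂ e₃, T e₁ e₃ e₂ = - T e₁ e₂ e₃ := by
    intro e₁ e₂ e₃
    rw [hT, hT]
    simp only [map_sub, LinearMap.sub_apply]
    have h1 : B e₁ ⁅e₂, e₃⁆ = - B e₁ ⁅e₃, e₂⁆ := by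
      rw [← lie_skew e₃ e₂, map_neg, neg_neg]
    linear_combination - hB_inv e₁ e₃ e₂ - hB_inv e₁ e₂ e₃ - h1 +
      hD_skew e₁ e₂ e₃ + hB_symm (D e₁ e₃) e₂
  refine ⟨h12, h23, fun e₁ e₂ e₃ => ?_⟩
  rw [h12 e₂ e₃ e₁, h23 e₂ e₁ e₃, h12 e₁ e₂ e₃]
  ring
end

section
/- Let 𝔤 be a quadratic Lie algebra and D, D' two generalized connections on 𝔤. Then D' has the same torsion and the same divergence as D (T_{D'} = T_D and div_{D'} = div_D) if and only if the trilinear form σ(a,b,c) = ⟨(D'−D)_a b, c⟩ belongs to Σ₀, that is: σ is skew-symmetric in its last two arguments, its cyclic sum σ(a,b,c)+σ(b,c,a)+σ(c,a,b) vanishes, and its contraction Σ_i σ(e_i, ẽ_i, ·) vanishes for a (hence any) basis {e_i} with ⟨·,·⟩-dual basis {ẽ_i}. (This is the Courant-algebroid-over-a-point case of the statement that the space of generalized connections with fixed torsion and fixed divergence is an affine space modelled on Σ₀.) -/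
/-!
Write `S = D' - D`; it is again skew for `⟨·,·⟩`, so `σ(a,b,c) = ⟨S_a b, c⟩` is skew in its last
two arguments. The bracket cancels in `T_{D'} - T_D`, which is
`σ(a,b,c) - σ(b,a,c) + σ(c,a,b)`, i.e. the cyclic sum of `σ` once `σ` is skew in `b, c`.
Computing traces in the basis `eᵢ` with the dual basis `ẽᵢ` gives
`div_{D'}(c) - div_D(c) = Σᵢ σ(eᵢ, c, ẽᵢ) = -Σᵢ σ(eᵢ, ẽᵢ, c)`.
-/

open LinearMap

namespace QuadraticLie

variable {R M : Type*} [CommRing R]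

section Dual

variable [AddCommGroup M] [Module R M] (B : M →ₗ[R] M →ₗ[R] R)
  {ι : Type*} [DecidableEq ι] (b : Module.Basis ι R M) (d : ι → M)

theorem flip_eq_coord_of_dual (hd : ∀ i j, B (b i) (d j) = if i = j then 1 else 0)
    (i : ι) : B.flip (d i) = b.coord i :=
  b.ext fun j => by simp [hd, Finsupp.single_apply]

theorem trace_eq_sum_of_dual [Fintype ι] (hd : ∀ i j, B (b i) (d j) = if i = j then 1 else 0)
    (f : M →ₗ[R] M) : trace R M f = ∑ i, B (f (b i)) (d i) := by
  rw [trace_eq_matrix_trace R b, Matrix.trace]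
  refine Finset.sum_congr rfl fun i _ => ?_
  rw [Matrix.diag_apply, toMatrix_apply, ← b.coord_apply, ← flip_eq_coord_of_dual B b d hd,
    flip_apply]

end Dual

variable [LieRing M] [Module R M] (B : M →ₗ[R] M →ₗ[R] R)

def IsGeneralizedConnection (D : M →ₗ[R] M →ₗ[R] M) : Prop :=
  ∀ e a b, B (D e a) b + B a (D e b) = 0

def torsion (D : M →ₗ[R] M →ₗ[R] M) (e₁ e₂ e₃ : M) : R :=
  B (D e₁ e₂ - D e₂ e₁ - ⁅e₁, e₂⁆) e₃ + B (D e₃ e₁) e₂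

noncomputable def divergence (D : M →ₗ[R] M →ₗ[R] M) (e : M) : R :=
  trace R M (D.flip e)

variable {B}

theorem IsGeneralizedConnection.sub {D D' : M →ₗ[R] M →ₗ[R] M}
    (hD' : IsGeneralizedConnection B D') (hD : IsGeneralizedConnection B D) :
    IsGeneralizedConnection B (D' - D) := fun e a b => by
  simp only [LinearMap.sub_apply, map_sub]
  linear_combination hD' e a b - hD e a b

theorem IsGeneralizedConnection.apply_swap (hB_symm : ∀ x y, B x y = B y x)
    {S : M →ₗ[R] M →ₗ[R] M} (hS : IsGeneralizedConnection B S) (a b c : M) :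
    B (S a b) c = -B (S a c) b := by
  linear_combination hS a b c - hB_symm b (S a c)

theorem torsion_sub_torsion (hB_symm : ∀ x y, B x y = B y x) {D D' : M →ₗ[R] M →ₗ[R] M}
    (hS : IsGeneralizedConnection B (D' - D)) (a b c : M) :
    torsion B D' a b c - torsion B D a b c =
      B ((D' - D) a b) c + B ((D' - D) b c) a + B ((D' - D) c a) b := by
  have hswap := hS.apply_swap hB_symm b a c
  simp only [torsion, LinearMap.sub_apply, map_sub] at hswap ⊢
  linear_combination -hswap

theorem torsion_eq_torsion_iff (hB_symm : ∀ x y, B x y = B y x) {D D' : M →ₗ[R] M →ₗ[R] M}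
    (hS : IsGeneralizedConnection B (D' - D)) :
    (∀ a b c, torsion B D' a b c = torsion B D a b c) ↔
      ∀ a b c, B ((D' - D) a b) c + B ((D' - D) b c) a + B ((D' - D) c a) b = 0 := by
  simp only [← torsion_sub_torsion hB_symm hS, sub_eq_zero]

theorem divergence_sub_divergence (hB_symm : ∀ x y, B x y = B y x)
    {D D' : M →ₗ[R] M →ₗ[R] M} (hS : IsGeneralizedConnection B (D' - D))
    {ι : Type*} [Fintype ι] [DecidableEq ι] (b : Module.Basis ι R M) (d : ι → M)
    (hd : ∀ i j, B (b i) (d j) = if i = j then 1 else 0) (c : M) :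
    divergence D' c - divergence D c = -∑ i, B ((D' - D) (b i) (d i)) c := by
  rw [divergence, divergence, ← map_sub, trace_eq_sum_of_dual B b d hd, ← Finset.sum_neg_distrib]
  refine Finset.sum_congr rfl fun i _ => ?_
  rw [hS.apply_swap hB_symm (b i) (d i) c, neg_neg]
  rfl

theorem divergence_eq_divergence_iff (hB_symm : ∀ x y, B x y = B y x)
    {D D' : M →ₗ[R] M →ₗ[R] M} (hS : IsGeneralizedConnection B (D' - D))
    {ι : Type*} [Fintype ι] [DecidableEq ι] (b : Module.Basis ι R M) (d : ι → M)
    (hd : ∀ i j, B (b i) (d j) = if i = j then 1 else 0) :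
    (∀ c, divergence D' c = divergence D c) ↔ ∀ c, ∑ i, B ((D' - D) (b i) (d i)) c = 0 := by
  simp only [← sub_eq_zero (a := divergence D' _), divergence_sub_divergence hB_symm hS b d hd,
    neg_eq_zero]

end QuadraticLie

open QuadraticLie

theorem statement_6_general
    {𝔤 : Type*} [LieRing 𝔤] [LieAlgebra ℝ 𝔤]
    (B : 𝔤 →ₗ[ℝ] 𝔤 →ₗ[ℝ] ℝ)
    (hB_symm : ∀ x y, B x y = B y x)
    (D D' : 𝔤 →ₗ[ℝ] 𝔤 →ₗ[ℝ] 𝔤)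
    (hD_skew : ∀ e a b, B (D e a) b + B a (D e b) = 0)
    (hD'_skew : ∀ e a b, B (D' e a) b + B a (D' e b) = 0)
    {ι : Type*} [Fintype ι] [DecidableEq ι]
    (bb : Module.Basis ι ℝ 𝔤) (d : ι → 𝔤)
    (hd : ∀ i j, B (bb i) (d j) = if i = j then 1 else 0)
    (σ : 𝔤 → 𝔤 → 𝔤 → ℝ)
    (hσ : ∀ a b c, σ a b c = B ((D' - D) a b) c) :
    ((∀ e₁ e₂ e₃ : 𝔤,
        B (D' e₁ e₂ - D' e₂ e₁ - ⁅e₁, e₂⁆) e₃ + B (D' e₃ e₁) e₂ =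
        B (D e₁ e₂ - D e₂ e₁ - ⁅e₁, e₂⁆) e₃ + B (D e₃ e₁) e₂) ∧
      (∀ e : 𝔤, LinearMap.trace ℝ 𝔤 (D'.flip e) = LinearMap.trace ℝ 𝔤 (D.flip e))) ↔
    ((∀ a b c, σ a b c = - σ a c b) ∧
      (∀ a b c, σ a b c + σ b c a + σ c a b = 0) ∧
      (∀ c, ∑ i, σ (bb i) (d i) c = 0)) := by
  obtain rfl : σ = fun a b c => B ((D' - D) a b) c := funext₃ hσ
  have hS : IsGeneralizedConnection B (D' - D) := IsGeneralizedConnection.sub hD'_skew hD_skew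
  exact (and_congr (torsion_eq_torsion_iff hB_symm hS)
      (divergence_eq_divergence_iff hB_symm hS bb d hd)).trans
    ⟨fun h => ⟨hS.apply_swap hB_symm, h⟩, fun h => h.2⟩

/-- On a quadratic Lie algebra, two generalized connections `D`, `D'` have
the same torsion and the same divergence iff `σ(a,b,c) = ⟨(D'−D)_a b, c⟩` lies in `Σ₀`:
skew in the last two arguments, vanishing cyclic sum, and vanishing contraction
`Σ_i σ(e_i, ẽ_i, ·) = 0`. -/
theorem statement_6
    {𝔤 : Type*} [LieRing 𝔤] [LieAlgebra ℝ 𝔤] [FiniteDimensional ℝ 𝔤]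
    (B : 𝔤 →ₗ[ℝ] 𝔤 →ₗ[ℝ] ℝ)
    (hB_symm : ∀ x y, B x y = B y x)
    (hB_nondeg : ∀ x, (∀ y, B x y = 0) → x = 0)
    (hB_inv : ∀ x y z, B ⁅x, y⁆ z = B x ⁅y, z⁆)
    (D D' : 𝔤 →ₗ[ℝ] 𝔤 →ₗ[ℝ] 𝔤)
    (hD_skew : ∀ e a b, B (D e a) b + B a (D e b) = 0)
    (hD'_skew : ∀ e a b, B (D' e a) b + B a (D' e b) = 0)
    {ι : Type*} [Fintype ι] [DecidableEq ι]
    (bb : Module.Basis ι ℝ 𝔤) (d : ι → 𝔤)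
    (hd : ∀ i j, B (bb i) (d j) = if i = j then 1 else 0)
    (σ : 𝔤 → 𝔤 → 𝔤 → ℝ)
    (hσ : ∀ a b c, σ a b c = B ((D' - D) a b) c) :
    ((∀ e₁ e₂ e₃ : 𝔤,
        B (D' e₁ e₂ - D' e₂ e₁ - ⁅e₁, e₂⁆) e₃ + B (D' e₃ e₁) e₂ =
        B (D e₁ e₂ - D e₂ e₁ - ⁅e₁, e₂⁆) e₃ + B (D e₃ e₁) e₂) ∧
      (∀ e : 𝔤, LinearMap.trace ℝ 𝔤 (D'.flip e) = LinearMap.trace ℝ 𝔤 (D.flip e))) ↔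
    ((∀ a b c, σ a b c = - σ a c b) ∧
      (∀ a b c, σ a b c + σ b c a + σ c a b = 0) ∧
      (∀ c, ∑ i, σ (bb i) (d i) c = 0)) :=
  statement_6_general B hB_symm D D' hD_skew hD'_skew bb d hd σ hσ
end

section
/- Let 𝔤 be a quadratic Lie algebra with generalized metric 𝔤 = V₊ ⊕ V₋, and let D, D' be V₊-compatible generalized connections with equal torsion, T_{D'} = T_D. Then the mixed-type operators of D and D' agree: D'_a b = D_a b whenever a ∈ V₋ and b ∈ V₊, and also whenever a ∈ V₊ and b ∈ V₋. -/
/-- On a quadratic Lie algebra with generalized metric `𝔤 = Vp ⊕ Vm`, two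
`Vp`-compatible generalized connections with equal torsion have the same mixed-type
operators: `D'_a b = D_a b` for `a ∈ Vm, b ∈ Vp` and for `a ∈ Vp, b ∈ Vm`. -/
theorem statement_8
    {𝔤 : Type*} [LieRing 𝔤] [LieAlgebra ℝ 𝔤] [FiniteDimensional ℝ 𝔤]
    (B : 𝔤 →ₗ[ℝ] 𝔤 →ₗ[ℝ] ℝ)
    (hB_symm : ∀ x y, B x y = B y x)
    (hB_nondeg : ∀ x, (∀ y, B x y = 0) → x = 0)
    (hB_inv : ∀ x y z, B ⁅x, y⁆ z = B x ⁅y, z⁆)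
    (Vp Vm : Submodule ℝ 𝔤)
    (hcompl : IsCompl Vp Vm)
    (horth : ∀ x ∈ Vp, ∀ y ∈ Vm, B x y = 0)
    (hndp : ∀ x ∈ Vp, (∀ y ∈ Vp, B x y = 0) → x = 0)
    (D D' : 𝔤 →ₗ[ℝ] 𝔤 →ₗ[ℝ] 𝔤)
    (hD_skew : ∀ e a b, B (D e a) b + B a (D e b) = 0)
    (hD'_skew : ∀ e a b, B (D' e a) b + B a (D' e b) = 0)
    (hD_compp : ∀ e, ∀ x ∈ Vp, D e x ∈ Vp) (hD_compm : ∀ e, ∀ x ∈ Vm, D e x ∈ Vm)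
    (hD'_compp : ∀ e, ∀ x ∈ Vp, D' e x ∈ Vp) (hD'_compm : ∀ e, ∀ x ∈ Vm, D' e x ∈ Vm)
    (hTeq : ∀ e₁ e₂ e₃ : 𝔤,
      B (D' e₁ e₂ - D' e₂ e₁ - ⁅e₁, e₂⁆) e₃ + B (D' e₃ e₁) e₂ =
      B (D e₁ e₂ - D e₂ e₁ - ⁅e₁, e₂⁆) e₃ + B (D e₃ e₁) e₂) :
    (∀ a ∈ Vm, ∀ b ∈ Vp, D' a b = D a b) ∧
    (∀ a ∈ Vp, ∀ b ∈ Vm, D' a b = D a b) := by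
  -- nondegeneracy of B on Vm
  have hndm : ∀ x ∈ Vm, (∀ y ∈ Vm, B x y = 0) → x = 0 := by
    intro x hx h
    apply hB_nondeg
    intro y
    have hy : y ∈ Vp ⊔ Vm := by rw [hcompl.sup_eq_top]; trivial
    obtain ⟨p, hp, m, hm, rfl⟩ := Submodule.mem_sup.mp hy
    have h1 : B x p = 0 := by rw [hB_symm]; exact horth p hp x hx
    have h2 : B x m = 0 := h m hm
    simp [h1, h2]
  constructor
  · intro a ha b hb
    have key : ∀ c ∈ Vp, B (D' a b - D a b) c = 0 := by
      intro c hc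
      have h := hTeq a b c
      have e1 : B (D' b a) c = 0 := by
        rw [hB_symm]; exact horth c hc _ (hD'_compm b a ha)
      have e2 : B (D b a) c = 0 := by
        rw [hB_symm]; exact horth c hc _ (hD_compm b a ha)
      have e3 : B (D' c a) b = 0 := by
        rw [hB_symm]; exact horth b hb _ (hD'_compm c a ha)
      have e4 : B (D c a) b = 0 := by
        rw [hB_symm]; exact horth b hb _ (hD_compm c a ha)
      simp only [map_sub, LinearMap.sub_apply, e1, e2, e3, e4] at h ⊢
      linarith
    have hmem : D' a b - D a b ∈ Vp :=
      Submodule.sub_mem _ (hD'_compp a b hb) (hD_compp a b hb)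
    exact sub_eq_zero.mp (hndp _ hmem key)
  · intro a ha b hb
    have key : ∀ c ∈ Vm, B (D' a b - D a b) c = 0 := by
      intro c hc
      have h := hTeq a b c
      have e1 : B (D' b a) c = 0 := horth _ (hD'_compp b a ha) c hc
      have e2 : B (D b a) c = 0 := horth _ (hD_compp b a ha) c hc
      have e3 : B (D' c a) b = 0 := horth _ (hD'_compp c a ha) b hb
      have e4 : B (D c a) b = 0 := horth _ (hD_compp c a ha) b hb
      simp only [map_sub, LinearMap.sub_apply, e1, e2, e3, e4] at h ⊢
      linarith
    have hmem : D' a b - D a b ∈ Vm :=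
      Submodule.sub_mem _ (hD'_compm a b hb) (hD_compm a b hb)
    exact sub_eq_zero.mp (hndm _ hmem key)
end

section
/- Let 𝔤 be a quadratic Lie algebra with generalized metric 𝔤 = V₊ ⊕ V₋, with projections P₊, P₋, and let D be a V₊-compatible generalized connection whose torsion is of pure type, i.e. T_D(a,b,c) = 0 whenever a, b, c are not all in V₊ nor all in V₋. Then the mixed-type operators of D are uniquely determined by the Lie bracket: D_a b = P₊[a,b] for all a ∈ V₋, b ∈ V₊, and D_a b = P₋[a,b] for all a ∈ V₊, b ∈ V₋. -/
/-- On a quadratic Lie algebra with generalized metric `𝔤 = Vp ⊕ Vm` with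
projections `Pp, Pm`, if `D` is a `Vp`-compatible generalized connection with pure-type
torsion, then its mixed-type operators are determined by the Lie bracket:
`D_a b = Pp[a,b]` for `a ∈ Vm, b ∈ Vp`, and `D_a b = Pm[a,b]` for `a ∈ Vp, b ∈ Vm`. -/
theorem statement_9
    {𝔤 : Type*} [LieRing 𝔤] [LieAlgebra ℝ 𝔤] [FiniteDimensional ℝ 𝔤]
    (B : 𝔤 →ₗ[ℝ] 𝔤 →ₗ[ℝ] ℝ)
    (hB_symm : ∀ x y, B x y = B y x)
    (hB_nondeg : ∀ x, (∀ y, B x y = 0) → x = 0)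
    (hB_inv : ∀ x y z, B ⁅x, y⁆ z = B x ⁅y, z⁆)
    (Vp Vm : Submodule ℝ 𝔤)
    (hcompl : IsCompl Vp Vm)
    (horth : ∀ x ∈ Vp, ∀ y ∈ Vm, B x y = 0)
    (hndp : ∀ x ∈ Vp, (∀ y ∈ Vp, B x y = 0) → x = 0)
    (Pp Pm : 𝔤 →ₗ[ℝ] 𝔤)
    (hPp : ∀ x, Pp x ∈ Vp) (hPm : ∀ x, Pm x ∈ Vm)
    (hPsum : ∀ x, Pp x + Pm x = x)
    (D : 𝔤 →ₗ[ℝ] 𝔤 →ₗ[ℝ] 𝔤)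
    (hD_skew : ∀ e a b, B (D e a) b + B a (D e b) = 0)
    (hD_compp : ∀ e, ∀ x ∈ Vp, D e x ∈ Vp) (hD_compm : ∀ e, ∀ x ∈ Vm, D e x ∈ Vm)
    (hT_pure : ∀ a b c : 𝔤,
      (a ∈ Vp ∨ a ∈ Vm) → (b ∈ Vp ∨ b ∈ Vm) → (c ∈ Vp ∨ c ∈ Vm) →
      ¬(a ∈ Vp ∧ b ∈ Vp ∧ c ∈ Vp) → ¬(a ∈ Vm ∧ b ∈ Vm ∧ c ∈ Vm) →
      B (D a b - D b a - ⁅a, b⁆) c + B (D c a) b = 0) :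
    (∀ a ∈ Vm, ∀ b ∈ Vp, D a b = Pp ⁅a, b⁆) ∧
    (∀ a ∈ Vp, ∀ b ∈ Vm, D a b = Pm ⁅a, b⁆) := by

  have hzero : ∀ x, x ∈ Vp → x ∈ Vm → x = 0 := fun x hp hm =>
    Submodule.disjoint_def.mp hcompl.disjoint x hp hm
  -- nondegeneracy on Vm
  have hndm : ∀ x ∈ Vm, (∀ y ∈ Vm, B x y = 0) → x = 0 := by
    intro x hx h
    apply hB_nondeg
    intro y
    have : B x y = B x (Pp y) + B x (Pm y) := by
      rw [← map_add, hPsum]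
    rw [this, h _ (hPm y), hB_symm, horth _ (hPp y) _ hx]
    ring
  constructor
  · intro a ha b hb
    by_cases ha0 : a = 0
    · subst ha0; simp
    by_cases hb0 : b = 0
    · subst hb0; simp
    have haP : a ∉ Vp := fun h => ha0 (hzero a h ha)
    have hbM : b ∉ Vm := fun h => hb0 (hzero b hb h)
    have hx : D a b - Pp ⁅a, b⁆ ∈ Vp :=
      Submodule.sub_mem _ (hD_compp a b hb) (hPp _)
    have key : ∀ c ∈ Vp, B (D a b - Pp ⁅a, b⁆) c = 0 := by
      intro c hc
      have hT := hT_pure a b c (Or.inr ha) (Or.inl hb) (Or.inl hc)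
        (fun h => haP h.1) (fun h => hbM h.2.1)
      have h1 : B (D b a) c = 0 := by
        rw [hB_symm]; exact horth _ hc _ (hD_compm b a ha)
      have h2 : B (D c a) b = 0 := by
        rw [hB_symm]; exact horth _ hb _ (hD_compm c a ha)
      have h3 : B (Pm ⁅a, b⁆) c = 0 := by
        rw [hB_symm]; exact horth _ hc _ (hPm _)
      have h4 : B ⁅a, b⁆ c = B (Pp ⁅a, b⁆) c := by
        conv_lhs => rw [← hPsum ⁅a, b⁆]
        simp [h3]
      simp only [map_sub, LinearMap.sub_apply, h1, h2, h4] at hT ⊢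
      linarith
    exact sub_eq_zero.mp (hndp _ hx key)
  · intro a ha b hb
    by_cases ha0 : a = 0
    · subst ha0; simp
    by_cases hb0 : b = 0
    · subst hb0; simp
    have haM : a ∉ Vm := fun h => ha0 (hzero a ha h)
    have hbP : b ∉ Vp := fun h => hb0 (hzero b h hb)
    have hx : D a b - Pm ⁅a, b⁆ ∈ Vm :=
      Submodule.sub_mem _ (hD_compm a b hb) (hPm _)
    have key : ∀ c ∈ Vm, B (D a b - Pm ⁅a, b⁆) c = 0 := by
      intro c hc
      have hT := hT_pure a b c (Or.inl ha) (Or.inr hb) (Or.inr hc)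
        (fun h => hbP h.2.1) (fun h => haM h.1)
      have h1 : B (D b a) c = 0 := horth _ (hD_compp b a ha) _ hc
      have h2 : B (D c a) b = 0 := horth _ (hD_compp c a ha) _ hb
      have h3 : B (Pp ⁅a, b⁆) c = 0 := horth _ (hPp _) _ hc
      have h4 : B ⁅a, b⁆ c = B (Pm ⁅a, b⁆) c := by
        conv_lhs => rw [← hPsum ⁅a, b⁆]
        simp [h3]
      simp only [map_sub, LinearMap.sub_apply, h1, h2, h4] at hT ⊢
      linarith
    exact sub_eq_zero.mp (hndm _ hx key)
end

section
/- Let 𝔤 be a quadratic Lie algebra with generalized metric 𝔤 = V₊ ⊕ V₋ with projections P₊, P₋. Define D: 𝔤 → End(𝔤) by D_{e₁}e₂ = P₊[P₋e₁, P₊e₂] + P₋[P₊e₁, P₋e₂] + ⅓P₊[P₊e₁, P₊e₂] + ⅓P₋[P₋e₁, P₋e₂]. Then D is a V₊-compatible generalized connection (in particular every D_e is skew-symmetric for ⟨·,·⟩), its torsion vanishes, T_D = 0, and its divergence vanishes, div_D = 0. In particular, every generalized metric on a quadratic Lie algebra admits a compatible torsion-free generalized connection. -/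
/-- A linear endomorphism that is skew-adjoint with respect to a nondegenerate
bilinear form on a finite-dimensional real vector space has trace zero. -/
lemma trace_eq_zero_of_skew_adjoint
    {V : Type*} [AddCommGroup V] [Module ℝ V] [FiniteDimensional ℝ V]
    (B : V →ₗ[ℝ] V →ₗ[ℝ] ℝ)
    (hnd : ∀ x, (∀ y, B x y = 0) → x = 0)
    (f : V →ₗ[ℝ] V)
    (hsk : ∀ a b, B (f a) b + B a (f b) = 0) :
    LinearMap.trace ℝ V f = 0 := by
  have hinj : Function.Injective B := by
    rw [injective_iff_map_eq_zero]
    intro x hx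
    exact hnd x fun y => by rw [hx]; rfl
  set Φ : V ≃ₗ[ℝ] Module.Dual ℝ V :=
    LinearMap.linearEquivOfInjective B hinj Subspace.dual_finrank_eq.symm with hΦ
  have hΦa : ∀ x, Φ x = B x := fun x => LinearMap.linearEquivOfInjective_apply hinj _ x
  have hconj : Φ.conj f = -(Module.Dual.transpose (R := ℝ) f) := by
    apply LinearMap.ext; intro φ
    apply LinearMap.ext; intro y
    have h1 : Φ (Φ.symm φ) = φ := Φ.apply_symm_apply φ
    simp only [LinearEquiv.conj_apply, LinearMap.coe_comp, Function.comp_apply,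
      LinearEquiv.coe_coe, LinearMap.neg_apply, Module.Dual.transpose_apply,
      LinearMap.comp_apply]
    rw [hΦa]
    have h3 : B (Φ.symm φ) (f y) = φ (f y) := by rw [← hΦa, h1]
    linarith [hsk (Φ.symm φ) y, h3]
  have htr1 : LinearMap.trace ℝ _ (Φ.conj f) = LinearMap.trace ℝ V f :=
    LinearMap.trace_conj' f Φ
  have htr2 : LinearMap.trace ℝ _ (Module.Dual.transpose (R := ℝ) f)
      = LinearMap.trace ℝ V f := by
    classical
    let b := Module.finBasis ℝ V
    rw [LinearMap.trace_eq_matrix_trace ℝ b.dualBasis,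
      LinearMap.toMatrix_transpose, Matrix.trace_transpose,
      ← LinearMap.trace_eq_matrix_trace ℝ b]
  rw [hconj] at htr1
  have hneg := (LinearMap.trace ℝ (Module.Dual ℝ V)).map_neg
    (Module.Dual.transpose (R := ℝ) f)
  rw [hneg, htr2] at htr1
  linarith

/-- On a quadratic Lie algebra with generalized metric `𝔤 = Vp ⊕ Vm` with
projections `Pp, Pm`, the map
`D_{e₁}e₂ = Pp[Pme₁,Ppe₂] + Pm[Ppe₁,Pme₂] + ⅓Pp[Ppe₁,Ppe₂] + ⅓Pm[Pme₁,Pme₂]`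
is a `Vp`-compatible generalized connection with vanishing torsion and vanishing
divergence. In particular every generalized metric on a quadratic Lie algebra admits a
compatible torsion-free generalized connection. -/
theorem statement_10
    {𝔤 : Type*} [LieRing 𝔤] [LieAlgebra ℝ 𝔤] [FiniteDimensional ℝ 𝔤]
    (B : 𝔤 →ₗ[ℝ] 𝔤 →ₗ[ℝ] ℝ)
    (hB_symm : ∀ x y, B x y = B y x)
    (hB_nondeg : ∀ x, (∀ y, B x y = 0) → x = 0)
    (hB_inv : ∀ x y z, B ⁅x, y⁆ z = B x ⁅y, z⁆)
    (Vp Vm : Submodule ℝ 𝔤)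
    (hcompl : IsCompl Vp Vm)
    (horth : ∀ x ∈ Vp, ∀ y ∈ Vm, B x y = 0)
    (hndp : ∀ x ∈ Vp, (∀ y ∈ Vp, B x y = 0) → x = 0)
    (Pp Pm : 𝔤 →ₗ[ℝ] 𝔤)
    (hPp : ∀ x, Pp x ∈ Vp) (hPm : ∀ x, Pm x ∈ Vm)
    (hPsum : ∀ x, Pp x + Pm x = x) :
    ∃ D : 𝔤 →ₗ[ℝ] 𝔤 →ₗ[ℝ] 𝔤,
      (∀ e₁ e₂, D e₁ e₂ =
        Pp ⁅Pm e₁, Pp e₂⁆ + Pm ⁅Pp e₁, Pm e₂⁆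
          + (1 / 3 : ℝ) • Pp ⁅Pp e₁, Pp e₂⁆ + (1 / 3 : ℝ) • Pm ⁅Pm e₁, Pm e₂⁆) ∧
      (∀ e a b, B (D e a) b + B a (D e b) = 0) ∧
      (∀ e, ∀ x ∈ Vp, D e x ∈ Vp) ∧ (∀ e, ∀ x ∈ Vm, D e x ∈ Vm) ∧
      (∀ e₁ e₂ e₃, B (D e₁ e₂ - D e₂ e₁ - ⁅e₁, e₂⁆) e₃ + B (D e₃ e₁) e₂ = 0) ∧
      (∀ e, LinearMap.trace ℝ 𝔤 (D.flip e) = 0) := by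
  classical
  -- basic projection identities
  have hPm0 : ∀ x ∈ Vp, Pm x = 0 := by
    intro x hx
    have h1 : Pm x = x - Pp x := eq_sub_of_add_eq' (hPsum x)
    have h2 : Pm x ∈ Vp := h1 ▸ sub_mem hx (hPp x)
    exact Submodule.disjoint_def.mp hcompl.disjoint _ h2 (hPm x)
  have hPp0 : ∀ x ∈ Vm, Pp x = 0 := by
    intro x hx
    have h1 : Pp x = x - Pm x := eq_sub_of_add_eq (hPsum x)
    have h2 : Pp x ∈ Vm := h1 ▸ sub_mem hx (hPm x)
    exact Submodule.disjoint_def.mp hcompl.disjoint.symm _ h2 (hPp x)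
  have hPpid : ∀ x ∈ Vp, Pp x = x := by
    intro x hx
    have h := hPsum x
    rw [hPm0 x hx, add_zero] at h
    exact h
  have hPmid : ∀ x ∈ Vm, Pm x = x := by
    intro x hx
    have h := hPsum x
    rw [hPp0 x hx, zero_add] at h
    exact h
  have hPpPp : ∀ e, Pp (Pp e) = Pp e := fun e => hPpid _ (hPp e)
  have hPmPp : ∀ e, Pm (Pp e) = 0 := fun e => hPm0 _ (hPp e)
  have hPpPm : ∀ e, Pp (Pm e) = 0 := fun e => hPp0 _ (hPm e)
  have hPmPm : ∀ e, Pm (Pm e) = Pm e := fun e => hPmid _ (hPm e)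
  -- self-adjointness of the projections
  have hadjp : ∀ u v, B (Pp u) v = B u (Pp v) := by
    intro u v
    have h1 : B (Pp u) v = B (Pp u) (Pp v) := by
      conv_lhs => rw [← hPsum v]
      rw [map_add, horth _ (hPp u) _ (hPm v), add_zero]
    have h2 : B u (Pp v) = B (Pp u) (Pp v) := by
      conv_lhs => rw [← hPsum u]
      rw [map_add, LinearMap.add_apply, hB_symm (Pm u) (Pp v),
        horth _ (hPp v) _ (hPm u), add_zero]
    rw [h1, h2]
  have hadjm : ∀ u v, B (Pm u) v = B u (Pm v) := by
    intro u v
    have h1 : B (Pm u) v = B (Pm u) (Pm v) := by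
      conv_lhs => rw [← hPsum v]
      rw [map_add, hB_symm (Pm u) (Pp v), horth _ (hPp v) _ (hPm u), zero_add]
    have h2 : B u (Pm v) = B (Pm u) (Pm v) := by
      conv_lhs => rw [← hPsum u]
      rw [map_add, LinearMap.add_apply, horth _ (hPp u) _ (hPm v), zero_add]
    rw [h1, h2]
  -- the cyclic trilinear form identities
  have hc_cyc : ∀ a b d : 𝔤, B ⁅a, b⁆ d = B ⁅b, d⁆ a := by
    intro a b d; rw [hB_inv, hB_symm]
  have hc_swap12 : ∀ a b d : 𝔤, B ⁅a, b⁆ d = -B ⁅b, a⁆ d := by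
    intro a b d
    have h : (⁅a, b⁆ : 𝔤) = -⁅b, a⁆ := (lie_skew a b).symm
    rw [h, map_neg, LinearMap.neg_apply]
  have hc_swap23 : ∀ a b d : 𝔤, B ⁅a, b⁆ d + B ⁅a, d⁆ b = 0 := by
    intro a b d
    rw [hB_inv, hB_inv, ← map_add, ← lie_skew b d, neg_add_cancel, map_zero]
  -- construction of the connection as a bilinear map
  have hDex : ∃ D : 𝔤 →ₗ[ℝ] 𝔤 →ₗ[ℝ] 𝔤, ∀ e₁ e₂, D e₁ e₂ =
      Pp ⁅Pm e₁, Pp e₂⁆ + Pm ⁅Pp e₁, Pm e₂⁆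
        + (1 / 3 : ℝ) • Pp ⁅Pp e₁, Pp e₂⁆ + (1 / 3 : ℝ) • Pm ⁅Pm e₁, Pm e₂⁆ := by
    refine ⟨LinearMap.mk₂ ℝ
      (fun e₁ e₂ => Pp ⁅Pm e₁, Pp e₂⁆ + Pm ⁅Pp e₁, Pm e₂⁆
        + (1 / 3 : ℝ) • Pp ⁅Pp e₁, Pp e₂⁆ + (1 / 3 : ℝ) • Pm ⁅Pm e₁, Pm e₂⁆)
      ?_ ?_ ?_ ?_, fun _ _ => rfl⟩
    · intro m₁ m₂ n
      simp only [map_add, add_lie, lie_add, smul_add]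
      module
    · intro c m n
      simp only [map_smul, smul_lie, lie_smul, smul_smul]
      module
    · intro m n₁ n₂
      simp only [map_add, add_lie, lie_add, smul_add]
      module
    · intro m c n
      simp only [map_smul, smul_lie, lie_smul, smul_smul]
      module
  obtain ⟨D, hD⟩ := hDex
  refine ⟨D, hD, ?_, ?_, ?_, ?_, ?_⟩
  · -- skew-symmetry
    intro e a b
    rw [hB_symm a (D e b), hD, hD]
    simp only [map_add, map_smul, LinearMap.add_apply, LinearMap.smul_apply, smul_eq_mul,
      hadjp, hadjm]
    linarith [hc_swap23 (Pm e) (Pp a) (Pp b), hc_swap23 (Pp e) (Pm a) (Pm b),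
      hc_swap23 (Pp e) (Pp a) (Pp b), hc_swap23 (Pm e) (Pm a) (Pm b)]
  · -- Vp compatibility
    intro e x hx
    rw [hD, hPpid x hx, hPm0 x hx]
    simp only [lie_zero, map_zero, smul_zero, add_zero]
    exact add_mem (hPp _) (Submodule.smul_mem _ _ (hPp _))
  · -- Vm compatibility
    intro e x hx
    rw [hD, hPmid x hx, hPp0 x hx]
    simp only [lie_zero, map_zero, smul_zero, add_zero, zero_add]
    exact add_mem (hPm _) (Submodule.smul_mem _ _ (hPm _))
  · -- torsion-free
    intro e₁ e₂ e₃
    have hbr : B ⁅e₁, e₂⁆ e₃ = B ⁅Pp e₁ + Pm e₁, Pp e₂ + Pm e₂⁆ (Pp e₃ + Pm e₃) := by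
      rw [hPsum, hPsum, hPsum]
    rw [map_sub, map_sub, LinearMap.sub_apply, LinearMap.sub_apply, hbr]
    simp only [hD, map_add, map_smul, LinearMap.add_apply, LinearMap.smul_apply,
      smul_eq_mul, lie_add, add_lie, hadjp, hadjm]
    linarith [hc_swap12 (Pm e₂) (Pp e₁) (Pp e₃), hc_swap12 (Pp e₂) (Pm e₁) (Pm e₃),
      hc_swap12 (Pp e₂) (Pp e₁) (Pp e₃), hc_swap12 (Pm e₂) (Pm e₁) (Pm e₃),
      hc_cyc (Pm e₃) (Pp e₁) (Pp e₂), hc_cyc (Pp e₃) (Pm e₁) (Pm e₂),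
      hc_cyc (Pp e₃) (Pp e₁) (Pp e₂), hc_cyc (Pm e₃) (Pm e₁) (Pm e₂)]
  · -- divergence-free
    intro e
    have hflip : D.flip e =
        Pp ∘ₗ (-(LieAlgebra.ad ℝ 𝔤 (Pp e))) ∘ₗ Pm
        + Pm ∘ₗ (-(LieAlgebra.ad ℝ 𝔤 (Pm e))) ∘ₗ Pp
        + (1 / 3 : ℝ) • (Pp ∘ₗ (-(LieAlgebra.ad ℝ 𝔤 (Pp e))) ∘ₗ Pp)
        + (1 / 3 : ℝ) • (Pm ∘ₗ (-(LieAlgebra.ad ℝ 𝔤 (Pm e))) ∘ₗ Pm) := by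
      apply LinearMap.ext; intro a
      rw [LinearMap.flip_apply, hD]
      simp only [LinearMap.add_apply, LinearMap.smul_apply, LinearMap.comp_apply,
        LinearMap.neg_apply, LieAlgebra.ad_apply, map_neg, smul_neg]
      rw [show (⁅Pp e, Pm a⁆ : 𝔤) = -⁅Pm a, Pp e⁆ from (lie_skew (Pp e) (Pm a)).symm,
        show (⁅Pm e, Pp a⁆ : 𝔤) = -⁅Pp a, Pm e⁆ from (lie_skew (Pm e) (Pp a)).symm,
        show (⁅Pp e, Pp a⁆ : 𝔤) = -⁅Pp a, Pp e⁆ from (lie_skew (Pp e) (Pp a)).symm,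
        show (⁅Pm e, Pm a⁆ : 𝔤) = -⁅Pm a, Pm e⁆ from (lie_skew (Pm e) (Pm a)).symm]
      simp only [map_neg, neg_neg, smul_neg]
    rw [hflip, map_add, map_add, map_add, map_smul, map_smul]
    have hz1 : LinearMap.trace ℝ 𝔤 (Pp ∘ₗ (-(LieAlgebra.ad ℝ 𝔤 (Pp e))) ∘ₗ Pm) = 0 := by
      rw [LinearMap.trace_comp_comm', LinearMap.comp_assoc]
      have h0 : Pm ∘ₗ Pp = 0 := LinearMap.ext fun a => hPmPp a
      rw [h0, LinearMap.comp_zero, map_zero]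
    have hz2 : LinearMap.trace ℝ 𝔤 (Pm ∘ₗ (-(LieAlgebra.ad ℝ 𝔤 (Pm e))) ∘ₗ Pp) = 0 := by
      rw [LinearMap.trace_comp_comm', LinearMap.comp_assoc]
      have h0 : Pp ∘ₗ Pm = 0 := LinearMap.ext fun a => hPpPm a
      rw [h0, LinearMap.comp_zero, map_zero]
    have hz3 : LinearMap.trace ℝ 𝔤 (Pp ∘ₗ (-(LieAlgebra.ad ℝ 𝔤 (Pp e))) ∘ₗ Pp) = 0 := by
      apply trace_eq_zero_of_skew_adjoint B hB_nondeg
      intro a b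
      simp only [LinearMap.comp_apply, LinearMap.neg_apply, LieAlgebra.ad_apply, map_neg,
        hB_symm a, hadjp]
      linarith [hc_swap23 (Pp e) (Pp a) (Pp b)]
    have hz4 : LinearMap.trace ℝ 𝔤 (Pm ∘ₗ (-(LieAlgebra.ad ℝ 𝔤 (Pm e))) ∘ₗ Pm) = 0 := by
      apply trace_eq_zero_of_skew_adjoint B hB_nondeg
      intro a b
      simp only [LinearMap.comp_apply, LinearMap.neg_apply, LieAlgebra.ad_apply, map_neg,
        hB_symm a, hadjm]
      linarith [hc_swap23 (Pm e) (Pm a) (Pm b)]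
    rw [hz1, hz2, hz3, hz4]
    simp
end

section
/- (First Bianchi identity over a point.) Let 𝔤 be a quadratic Lie algebra with generalized metric 𝔤 = V₊ ⊕ V₋, and let D be a torsion-free V₊-compatible generalized connection. Define the mixed curvature R(a,f)b = D_a D_f b − D_f D_a b − D_{[a,f]} b. Then for all e₁, e₂, e₃ ∈ V₊ and f ∈ V₋, the cyclic sum vanishes: ⟨R(e₁,f)e₂, e₃⟩ + ⟨R(e₂,f)e₃, e₁⟩ + ⟨R(e₃,f)e₁, e₂⟩ = 0; and likewise with the roles of V₊ and V₋ exchanged. -/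
/-- First Bianchi identity over a point: On a quadratic Lie algebra with
generalized metric `𝔤 = Vp ⊕ Vm` and torsion-free `Vp`-compatible generalized connection
`D`, the mixed curvature `R(a,f)b = D_a D_f b − D_f D_a b − D_{[a,f]} b` satisfies the
cyclic identity `⟨R(e₁,f)e₂,e₃⟩ + ⟨R(e₂,f)e₃,e₁⟩ + ⟨R(e₃,f)e₁,e₂⟩ = 0` for
`e₁,e₂,e₃ ∈ Vp`, `f ∈ Vm`, and likewise with `Vp` and `Vm` exchanged. -/
theorem statement_11
    {𝔤 : Type*} [LieRing 𝔤] [LieAlgebra ℝ 𝔤] [FiniteDimensional ℝ 𝔤]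
    (B : 𝔤 →ₗ[ℝ] 𝔤 →ₗ[ℝ] ℝ)
    (hB_symm : ∀ x y, B x y = B y x)
    (hB_nondeg : ∀ x, (∀ y, B x y = 0) → x = 0)
    (hB_inv : ∀ x y z, B ⁅x, y⁆ z = B x ⁅y, z⁆)
    (Vp Vm : Submodule ℝ 𝔤)
    (hcompl : IsCompl Vp Vm)
    (horth : ∀ x ∈ Vp, ∀ y ∈ Vm, B x y = 0)
    (hndp : ∀ x ∈ Vp, (∀ y ∈ Vp, B x y = 0) → x = 0)
    (D : 𝔤 →ₗ[ℝ] 𝔤 →ₗ[ℝ] 𝔤)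
    (hD_skew : ∀ e a b, B (D e a) b + B a (D e b) = 0)
    (hD_compp : ∀ e, ∀ x ∈ Vp, D e x ∈ Vp) (hD_compm : ∀ e, ∀ x ∈ Vm, D e x ∈ Vm)
    (hD_tf : ∀ e₁ e₂ e₃, B (D e₁ e₂ - D e₂ e₁ - ⁅e₁, e₂⁆) e₃ + B (D e₃ e₁) e₂ = 0)
    (R : 𝔤 → 𝔤 → 𝔤 → 𝔤)
    (hR : ∀ a f b, R a f b = D a (D f b) - D f (D a b) - D ⁅a, f⁆ b) :
    (∀ f ∈ Vm, ∀ e₁ ∈ Vp, ∀ e₂ ∈ Vp, ∀ e₃ ∈ Vp,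
      B (R e₁ f e₂) e₃ + B (R e₂ f e₃) e₁ + B (R e₃ f e₁) e₂ = 0) ∧
    (∀ f ∈ Vp, ∀ e₁ ∈ Vm, ∀ e₂ ∈ Vm, ∀ e₃ ∈ Vm,
      B (R e₁ f e₂) e₃ + B (R e₂ f e₃) e₁ + B (R e₃ f e₁) e₂ = 0) := by
  have skew : ∀ e a b, B (D e a) b = -B a (D e b) := fun e a b => by linarith [hD_skew e a b]
  have tf : ∀ u a b, B (D u a) b = -B (D a b) u + B (D b a) u + B ⁅a, b⁆ u := by
    intro u a b
    have h := hD_tf a b u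
    simp only [map_sub, LinearMap.sub_apply] at h
    linarith
  have key : ∀ (W U : Submodule ℝ 𝔤),
      (∀ x ∈ W, ∀ y ∈ U, B x y = 0) →
      (∀ e, ∀ x ∈ W, D e x ∈ W) → (∀ e, ∀ x ∈ U, D e x ∈ U) →
      ∀ f ∈ U, ∀ e₁ ∈ W, ∀ e₂ ∈ W, ∀ e₃ ∈ W,
      B (R e₁ f e₂) e₃ + B (R e₂ f e₃) e₁ + B (R e₃ f e₁) e₂ = 0 := by
    intro W U horth' hW hU f hf e₁ h1 e₂ h2 e₃ h3
    have orth2 : ∀ x ∈ U, ∀ y ∈ W, B x y = 0 := fun x hx y hy => by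
      rw [hB_symm]; exact horth' y hy x hx
    have mixed : ∀ x ∈ W, ∀ y ∈ W, B (D f x) y = B ⁅f, x⁆ y := by
      intro x hx y hy
      have h := hD_tf x f y
      simp only [map_sub, LinearMap.sub_apply] at h
      have hxf : B (D x f) y = 0 := orth2 _ (hU x f hf) y hy
      have hyx : B (D y x) f = 0 := horth' _ (hW y x hx) f hf
      have hsk : B ⁅x, f⁆ y = -B ⁅f, x⁆ y := by
        rw [← lie_skew f x, map_neg, LinearMap.neg_apply, neg_neg]
      linarith
    -- term rewrites
    have t1 : ∀ a b c, b ∈ W → c ∈ W → B (D a (D f b)) c = -B f ⁅b, D a c⁆ := by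
      intro a b c hb hc
      rw [skew a (D f b) c, mixed b hb (D a c) (hW a c hc), hB_inv]
    have t2 : ∀ a b c, b ∈ W → c ∈ W → B (D f (D a b)) c = B f ⁅D a b, c⁆ := by
      intro a b c hb hc
      rw [mixed (D a b) (hW a b hb) c hc, hB_inv]
    have pairf : ∀ x a, B x ⁅a, f⁆ = B f ⁅x, a⁆ := by
      intro x a; rw [← hB_inv, hB_symm]
    have t3 : ∀ a b c, B (D ⁅a, f⁆ b) c
        = -B f ⁅D b c, a⁆ + B f ⁅D c b, a⁆ + B f ⁅⁅b, c⁆, a⁆ := by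
      intro a b c
      rw [tf ⁅a, f⁆ b c, pairf, pairf, pairf]
    have flip : ∀ x y, B f ⁅x, y⁆ = -B f ⁅y, x⁆ := by
      intro x y; rw [← lie_skew y x, map_neg, neg_neg]
    have jac : B f ⁅⁅e₂, e₃⁆, e₁⁆ + B f ⁅⁅e₃, e₁⁆, e₂⁆ + B f ⁅⁅e₁, e₂⁆, e₃⁆ = 0 := by
      have h := lie_jacobi e₁ e₂ e₃
      have a1 : ⁅⁅e₂, e₃⁆, e₁⁆ = -⁅e₁, ⁅e₂, e₃⁆⁆ := by
        rw [← lie_skew e₁ ⁅e₂, e₃⁆, neg_neg]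
      have a2 : ⁅⁅e₃, e₁⁆, e₂⁆ = -⁅e₂, ⁅e₃, e₁⁆⁆ := by
        rw [← lie_skew e₂ ⁅e₃, e₁⁆, neg_neg]
      have a3 : ⁅⁅e₁, e₂⁆, e₃⁆ = -⁅e₃, ⁅e₁, e₂⁆⁆ := by
        rw [← lie_skew e₃ ⁅e₁, e₂⁆, neg_neg]
      have : ⁅⁅e₂, e₃⁆, e₁⁆ + ⁅⁅e₃, e₁⁆, e₂⁆ + ⁅⁅e₁, e₂⁆, e₃⁆ = (0 : 𝔤) := by
        rw [a1, a2, a3, show -⁅e₁, ⁅e₂, e₃⁆⁆ + -⁅e₂, ⁅e₃, e₁⁆⁆ + -⁅e₃, ⁅e₁, e₂⁆⁆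
          = -(⁅e₁, ⁅e₂, e₃⁆⁆ + ⁅e₂, ⁅e₃, e₁⁆⁆ + ⁅e₃, ⁅e₁, e₂⁆⁆) by abel, h, neg_zero]
      calc B f ⁅⁅e₂, e₃⁆, e₁⁆ + B f ⁅⁅e₃, e₁⁆, e₂⁆ + B f ⁅⁅e₁, e₂⁆, e₃⁆
          = B f (⁅⁅e₂, e₃⁆, e₁⁆ + ⁅⁅e₃, e₁⁆, e₂⁆ + ⁅⁅e₁, e₂⁆, e₃⁆) := by
            simp [map_add]
        _ = 0 := by rw [this, map_zero]
    simp only [hR, map_sub, LinearMap.sub_apply]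
    rw [t1 e₁ e₂ e₃ h2 h3, t2 e₁ e₂ e₃ h2 h3, t3 e₁ e₂ e₃,
        t1 e₂ e₃ e₁ h3 h1, t2 e₂ e₃ e₁ h3 h1, t3 e₂ e₃ e₁,
        t1 e₃ e₁ e₂ h1 h2, t2 e₃ e₁ e₂ h1 h2, t3 e₃ e₁ e₂]
    linarith [flip e₂ (D e₁ e₃), flip e₃ (D e₂ e₁), flip e₁ (D e₃ e₂), jac]
  exact ⟨key Vp Vm horth hD_compp hD_compm,
    key Vm Vp (fun x hx y hy => by rw [hB_symm]; exact horth y hy x hx) hD_compm hD_compp⟩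
end

section
/- Let 𝔤 be a quadratic Lie algebra, D a generalized connection on 𝔤, and e ∈ 𝔤. Then adding the Weyl endomorphism χ^e does not change the torsion: T_{D + χ^e} = T_D, where χ^e_a b = ⟨a,b⟩e − ⟨e,b⟩a. -/
/-- On a quadratic Lie algebra, adding the Weyl endomorphism
`χ^e_a b = ⟨a,b⟩e − ⟨e,b⟩a` to a generalized connection does not change the torsion:
`T_{D+χ^e} = T_D`. -/
theorem statement_12
    {𝔤 : Type*} [LieRing 𝔤] [LieAlgebra ℝ 𝔤] [FiniteDimensional ℝ 𝔤]
    (B : 𝔤 →ₗ[ℝ] 𝔤 →ₗ[ℝ] ℝ)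
    (hB_symm : ∀ x y, B x y = B y x)
    (hB_nondeg : ∀ x, (∀ y, B x y = 0) → x = 0)
    (hB_inv : ∀ x y z, B ⁅x, y⁆ z = B x ⁅y, z⁆)
    (D : 𝔤 →ₗ[ℝ] 𝔤 →ₗ[ℝ] 𝔤)
    (hD_skew : ∀ e a b, B (D e a) b + B a (D e b) = 0)
    (e : 𝔤)
    (χ : 𝔤 →ₗ[ℝ] 𝔤 →ₗ[ℝ] 𝔤)
    (hχ : ∀ a b, χ a b = B a b • e - B e b • a) :
    ∀ e₁ e₂ e₃ : 𝔤,
      B ((D + χ) e₁ e₂ - (D + χ) e₂ e₁ - ⁅e₁, e₂⁆) e₃ + B ((D + χ) e₃ e₁) e₂ =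
      B (D e₁ e₂ - D e₂ e₁ - ⁅e₁, e₂⁆) e₃ + B (D e₃ e₁) e₂ := by
  intro e₁ e₂ e₃
  simp only [LinearMap.add_apply, hχ, map_sub, map_add, map_smul, LinearMap.sub_apply,
    LinearMap.smul_apply, smul_eq_mul]
  rw [hB_symm e₂ e₁, hB_symm e e₂, hB_symm e e₁, hB_symm e₃ e₂, hB_symm e₃ e₁]
  ring
end

section
/- Let 𝔤 be a quadratic Lie algebra with generalized metric 𝔤 = V₊ ⊕ V₋, where dim V₊ ≥ 2 and dim V₋ ≥ 2. Then for every linear functional ξ: 𝔤 → ℝ there exists a torsion-free V₊-compatible generalized connection D on 𝔤 with divergence div_D = ξ. (That is, the space 𝒟(V₊, div) of V₊-compatible torsion-free generalized connections with prescribed divergence is non-empty for every prescribed divergence.) -/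
/-!
Let `P`, `Q` be the projections onto `V₊`, `V₋`; orthogonality makes them `B`-self-adjoint.
Since `(x, y, z) ↦ ⟨⁅x, y⁆, z⟩` is totally skew, the connection
`D₀ e a = ⅓ P⁅P e, P a⁆ + ⅓ Q⁅Q e, Q a⁆ + P⁅Q e, P a⁆ + Q⁅P e, Q a⁆`
is skew, `V₊`-compatible and torsion-free. Its divergence is then adjusted on each summand `W`
by the tensor `e, a ↦ ⟨e, a⟩ χ - ⟨χ, a⟩ e` (arguments projected to `W`, `χ ∈ W`): it is skew
and has no totally skew part, so torsion-freeness survives, and its divergence is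
`(1 - dim W) ⟨χ, ·⟩`. As `⟨·, ·⟩` is nondegenerate on `W` and `dim W ≠ 1`, a suitable `χ`
produces any prescribed functional on `W`.
-/

open Module Submodule

section Projection

variable {K V : Type*} [Field K] [AddCommGroup V] [Module K V] {B : V →ₗ[K] V →ₗ[K] K}
  {p q : Submodule K V}

theorem isSelfAdjoint_projection (hB : ∀ x y, B x y = B y x) (hpq : IsCompl p q)
    (horth : ∀ x ∈ p, ∀ y ∈ q, B x y = 0) : B.IsSelfAdjoint (p.projection q hpq) := by
  intro x y
  set P := p.projection q hpq
  set Q := q.projection p hpq.symm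
  calc B (P x) y = B (P x) (P y + Q y) := by rw [projection_add_projection_eq_self]
    _ = B (P x) (P y) := by
      rw [map_add, horth _ (projection_apply_mem _ _) _ (projection_apply_mem _ _), add_zero]
    _ = B (P x + Q x) (P y) := by
      rw [map_add, LinearMap.add_apply, hB (Q x),
        horth _ (projection_apply_mem _ _) _ (projection_apply_mem _ _), add_zero]
    _ = B x (P y) := by rw [projection_add_projection_eq_self]

theorem apply_projection_of_mem {hpq : IsCompl p q} (hP : B.IsSelfAdjoint (p.projection q hpq))
    {x : V} (hx : x ∈ p) (y : V) : B x (p.projection q hpq y) = B x y := by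
  rw [← hP, projection_apply_of_mem_left hpq hx]

theorem apply_projection_projection {hpq : IsCompl p q}
    (hP : B.IsSelfAdjoint (p.projection q hpq)) (x y : V) :
    B (p.projection q hpq x) (p.projection q hpq y) = B (p.projection q hpq x) y :=
  apply_projection_of_mem hP (projection_apply_mem hpq x) y

theorem apply_projection_comm (hB : ∀ x y, B x y = B y x) {hpq : IsCompl p q}
    (hP : B.IsSelfAdjoint (p.projection q hpq)) (x y : V) :
    B (p.projection q hpq x) y = B (p.projection q hpq y) x := by
  rw [hP, hB]

theorem separatingLeft_domRestrict₁₂ (hB : B.SeparatingLeft) (hpq : IsCompl p q)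
    (horth : ∀ x ∈ p, ∀ y ∈ q, B x y = 0) : (B.domRestrict₁₂ p p).SeparatingLeft := by
  rintro ⟨x, hx⟩ hxp
  rw [Submodule.mk_eq_zero]
  refine hB x fun z => ?_
  obtain ⟨y, hy, w, hw, rfl⟩ := mem_sup.1 (hpq.sup_eq_top ▸ mem_top : z ∈ p ⊔ q)
  rw [map_add, horth x hx w hw, add_zero]
  exact hxp ⟨y, hy⟩

theorem exists_mem_forall_apply_eq [FiniteDimensional K V]
    (hp : (B.domRestrict₁₂ p p).SeparatingLeft) (f : V →ₗ[K] K) :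
    ∃ χ ∈ p, ∀ y ∈ p, B χ y = f y := by
  have hinj : Function.Injective (B.domRestrict₁₂ p p) := by
    rwa [← LinearMap.ker_eq_bot, ← LinearMap.separatingLeft_iff_ker_eq_bot]
  obtain ⟨χ, hχ⟩ := (LinearMap.injective_iff_surjective_of_finrank_eq_finrank
    Subspace.dual_finrank_eq.symm).1 hinj (f.domRestrict p)
  exact ⟨χ, χ.2, fun y hy => LinearMap.congr_fun hχ ⟨y, hy⟩⟩

noncomputable def divergenceCorrection (B : V →ₗ[K] V →ₗ[K] K) (hpq : IsCompl p q) (χ : V) :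
    V →ₗ[K] V →ₗ[K] V :=
  LinearMap.mk₂ K
    (fun e a => B (p.projection q hpq e) (p.projection q hpq a) • χ -
      B χ (p.projection q hpq a) • p.projection q hpq e)
    (fun _ _ _ => by simp only [map_add, LinearMap.add_apply]; module)
    (fun _ _ _ => by simp only [map_smul, LinearMap.smul_apply]; module)
    (fun _ _ _ => by simp only [map_add]; module)
    (fun _ _ _ => by simp only [map_smul]; module)

variable {hpq : IsCompl p q} {χ : V}

theorem divergenceCorrection_apply (e a : V) :
    divergenceCorrection B hpq χ e a = B (p.projection q hpq e) (p.projection q hpq a) • χ -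
      B χ (p.projection q hpq a) • p.projection q hpq e := rfl

theorem divergenceCorrection_apply_mem (hχ : χ ∈ p) (e a : V) :
    divergenceCorrection B hpq χ e a ∈ p :=
  sub_mem (smul_mem _ _ hχ) (smul_mem _ _ (projection_apply_mem _ _))

theorem divergenceCorrection_apply_of_mem_right (e : V) {a : V} (ha : a ∈ q) :
    divergenceCorrection B hpq χ e a = 0 := by
  simp [divergenceCorrection_apply, projection_apply_of_mem_right hpq ha]

theorem divergenceCorrection_skew (hB : ∀ x y, B x y = B y x)
    (hP : B.IsSelfAdjoint (p.projection q hpq)) (hχ : χ ∈ p) (e a b : V) :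
    B (divergenceCorrection B hpq χ e a) b + B a (divergenceCorrection B hpq χ e b) = 0 := by
  rw [hB a]
  simp only [divergenceCorrection_apply, map_sub, map_smul, LinearMap.sub_apply,
    LinearMap.smul_apply, smul_eq_mul, apply_projection_of_mem hP hχ,
    apply_projection_projection hP]
  ring

theorem divergenceCorrection_torsion (hB : ∀ x y, B x y = B y x)
    (hP : B.IsSelfAdjoint (p.projection q hpq)) (hχ : χ ∈ p) (e₁ e₂ e₃ : V) :
    B (divergenceCorrection B hpq χ e₁ e₂ - divergenceCorrection B hpq χ e₂ e₁) e₃ +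
      B (divergenceCorrection B hpq χ e₃ e₁) e₂ = 0 := by
  simp only [divergenceCorrection_apply, map_sub, map_smul, LinearMap.sub_apply,
    LinearMap.smul_apply, smul_eq_mul, apply_projection_of_mem hP hχ,
    apply_projection_projection hP]
  linear_combination B χ e₃ * apply_projection_comm hB hP e₁ e₂ +
    B χ e₂ * apply_projection_comm hB hP e₃ e₁ + B χ e₁ * apply_projection_comm hB hP e₂ e₃

theorem trace_divergenceCorrection_flip [FiniteDimensional K V] (hχ : χ ∈ p) (e : V) :
    LinearMap.trace K V ((divergenceCorrection B hpq χ).flip e) =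
      (1 - finrank K p) * B χ (p.projection q hpq e) := by
  set P := p.projection q hpq
  have hflip : (divergenceCorrection B hpq χ).flip e =
      (B.flip (P e) ∘ₗ P).smulRight χ - B χ (P e) • P := by
    ext a
    rfl
  have hproj : LinearMap.IsProj p P :=
    ⟨projection_apply_mem hpq, fun x hx => projection_apply_of_mem_left hpq hx⟩
  rw [hflip, map_sub, map_smul, LinearMap.trace_smulRight, hproj.trace, LinearMap.comp_apply,
    LinearMap.flip_apply, projection_apply_of_mem_left hpq hχ, smul_eq_mul]
  ring

theorem exists_trace_divergenceCorrection_flip_eq [FiniteDimensional K V]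
    (hB : B.SeparatingLeft) (hpq : IsCompl p q) (horth : ∀ x ∈ p, ∀ y ∈ q, B x y = 0)
    (hp : (finrank K p : K) ≠ 1) (f : V →ₗ[K] K) :
    ∃ χ ∈ p, ∀ e, LinearMap.trace K V ((divergenceCorrection B hpq χ).flip e) =
      f (p.projection q hpq e) := by
  obtain ⟨χ, hχ, hχf⟩ := exists_mem_forall_apply_eq (separatingLeft_domRestrict₁₂ hB hpq horth)
    ((1 - finrank K p : K)⁻¹ • f)
  refine ⟨χ, hχ, fun e => ?_⟩
  rw [trace_divergenceCorrection_flip hχ, hχf _ (projection_apply_mem hpq e),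
    LinearMap.smul_apply, smul_eq_mul, ← mul_assoc, mul_inv_cancel₀ (sub_ne_zero.2 hp.symm),
    one_mul]

end Projection

section CanonicalConnection

variable {K L : Type*} [Field K] [LieRing L] [LieAlgebra K L] {B : L →ₗ[K] L →ₗ[K] K}
  {p q : Submodule K L}

theorem apply_lie_swap_left (x y z : L) : B ⁅x, y⁆ z = -B ⁅y, x⁆ z := by
  rw [← lie_skew, map_neg, LinearMap.neg_apply]

theorem apply_lie_swap_right (hinv : ∀ x y z, B ⁅x, y⁆ z = B x ⁅y, z⁆) (x y z : L) :
    B ⁅x, y⁆ z = -B ⁅x, z⁆ y := by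
  rw [hinv, hinv, ← lie_skew, map_neg]

theorem apply_lie_rotate (hB : ∀ x y, B x y = B y x) (hinv : ∀ x y z, B ⁅x, y⁆ z = B x ⁅y, z⁆)
    (x y z : L) : B ⁅z, x⁆ y = B ⁅x, y⁆ z := by
  rw [hinv, hB]

theorem apply_lie_eq_sum_projections (hpq : IsCompl p q) (x y z : L) :
    let P := p.projection q hpq
    let Q := q.projection p hpq.symm
    B ⁅x, y⁆ z =
      B ⁅P x, P y⁆ (P z) + B ⁅P x, P y⁆ (Q z) + B ⁅P x, Q y⁆ (P z) + B ⁅P x, Q y⁆ (Q z) +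
      B ⁅Q x, P y⁆ (P z) + B ⁅Q x, P y⁆ (Q z) + B ⁅Q x, Q y⁆ (P z) + B ⁅Q x, Q y⁆ (Q z) := by
  intro P Q
  conv_lhs => rw [← projection_add_projection_eq_self hpq x,
    ← projection_add_projection_eq_self hpq y, ← projection_add_projection_eq_self hpq z]
  simp only [add_lie, lie_add, map_add, LinearMap.add_apply]
  ring

def projectedBracket (R S T : Module.End K L) : L →ₗ[K] L →ₗ[K] L :=
  ((LieAlgebra.ad K L : L →ₗ[K] Module.End K L).compl₁₂ S T).compr₂ R

-- The torsion of a totally skew `D` is `3 D`, hence the factor `⅓` on the pure components.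
noncomputable def canonicalConnection (hpq : IsCompl p q) : L →ₗ[K] L →ₗ[K] L :=
  let P := p.projection q hpq
  let Q := q.projection p hpq.symm
  (3⁻¹ : K) • projectedBracket P P P + (3⁻¹ : K) • projectedBracket Q Q Q +
    projectedBracket P Q P + projectedBracket Q P Q

theorem canonicalConnection_symm (hpq : IsCompl p q) :
    canonicalConnection hpq.symm = canonicalConnection hpq := by
  simp only [canonicalConnection]
  abel

theorem canonicalConnection_apply (hpq : IsCompl p q) (e a : L) :
    let P := p.projection q hpq
    let Q := q.projection p hpq.symm
    canonicalConnection hpq e a =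
      (3⁻¹ : K) • P ⁅P e, P a⁆ + (3⁻¹ : K) • Q ⁅Q e, Q a⁆ + P ⁅Q e, P a⁆ + Q ⁅P e, Q a⁆ :=
  rfl

theorem canonicalConnection_apply_mem (hpq : IsCompl p q) (e : L) {a : L} (ha : a ∈ p) :
    canonicalConnection hpq e a ∈ p := by
  simp only [canonicalConnection_apply, projection_apply_of_mem_right hpq.symm ha, lie_zero,
    map_zero, smul_zero, add_zero]
  exact add_mem (smul_mem _ _ (projection_apply_mem _ _)) (projection_apply_mem _ _)

theorem canonicalConnection_apply_mem_right (hpq : IsCompl p q) (e : L) {a : L} (ha : a ∈ q) :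
    canonicalConnection hpq e a ∈ q := by
  rw [← canonicalConnection_symm]
  exact canonicalConnection_apply_mem hpq.symm e ha

variable {hpq : IsCompl p q}

theorem apply_canonicalConnection (hP : B.IsSelfAdjoint (p.projection q hpq))
    (hQ : B.IsSelfAdjoint (q.projection p hpq.symm)) (e a b : L) :
    let P := p.projection q hpq
    let Q := q.projection p hpq.symm
    B (canonicalConnection hpq e a) b =
      3⁻¹ * B ⁅P e, P a⁆ (P b) + 3⁻¹ * B ⁅Q e, Q a⁆ (Q b) + B ⁅Q e, P a⁆ (P b) +
        B ⁅P e, Q a⁆ (Q b) := by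
  simp only [canonicalConnection_apply, map_add, map_smul, LinearMap.add_apply,
    LinearMap.smul_apply, smul_eq_mul, hP _ b, hQ _ b]

theorem canonicalConnection_skew (hB : ∀ x y, B x y = B y x)
    (hinv : ∀ x y z, B ⁅x, y⁆ z = B x ⁅y, z⁆) (hP : B.IsSelfAdjoint (p.projection q hpq))
    (hQ : B.IsSelfAdjoint (q.projection p hpq.symm)) (e a b : L) :
    B (canonicalConnection hpq e a) b + B a (canonicalConnection hpq e b) = 0 := by
  rw [hB a, apply_canonicalConnection hP hQ, apply_canonicalConnection hP hQ]
  set P := p.projection q hpq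
  set Q := q.projection p hpq.symm
  have swap := apply_lie_swap_right hinv
  linear_combination 3⁻¹ * swap (P e) (P a) (P b) + 3⁻¹ * swap (Q e) (Q a) (Q b) +
    swap (Q e) (P a) (P b) + swap (P e) (Q a) (Q b)

theorem canonicalConnection_torsion [CharZero K] (hB : ∀ x y, B x y = B y x)
    (hinv : ∀ x y z, B ⁅x, y⁆ z = B x ⁅y, z⁆) (hP : B.IsSelfAdjoint (p.projection q hpq))
    (hQ : B.IsSelfAdjoint (q.projection p hpq.symm)) (e₁ e₂ e₃ : L) :
    B (canonicalConnection hpq e₁ e₂ - canonicalConnection hpq e₂ e₁) e₃ +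
      B (canonicalConnection hpq e₃ e₁) e₂ = B ⁅e₁, e₂⁆ e₃ := by
  rw [map_sub, LinearMap.sub_apply, apply_canonicalConnection hP hQ,
    apply_canonicalConnection hP hQ, apply_canonicalConnection hP hQ,
    apply_lie_eq_sum_projections hpq e₁ e₂ e₃]
  set P := p.projection q hpq
  set Q := q.projection p hpq.symm
  have swap := apply_lie_swap_left (B := B)
  have rot := apply_lie_rotate hB hinv
  linear_combination
      - (3⁻¹ : K) * swap (P e₂) (P e₁) (P e₃) - (3⁻¹ : K) * swap (Q e₂) (Q e₁) (Q e₃)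
      - swap (Q e₂) (P e₁) (P e₃) - swap (P e₂) (Q e₁) (Q e₃)
      + (3⁻¹ : K) * rot (P e₁) (P e₂) (P e₃) + (3⁻¹ : K) * rot (Q e₁) (Q e₂) (Q e₃)
      + rot (P e₁) (P e₂) (Q e₃) + rot (Q e₁) (Q e₂) (P e₃)

noncomputable def correctedConnection (B : L →ₗ[K] L →ₗ[K] K) (hpq : IsCompl p q) (χ χ' : L) :
    L →ₗ[K] L →ₗ[K] L :=
  canonicalConnection hpq + divergenceCorrection B hpq χ + divergenceCorrection B hpq.symm χ'

variable {χ χ' : L}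

theorem correctedConnection_skew (hB : ∀ x y, B x y = B y x)
    (hinv : ∀ x y z, B ⁅x, y⁆ z = B x ⁅y, z⁆) (hP : B.IsSelfAdjoint (p.projection q hpq))
    (hQ : B.IsSelfAdjoint (q.projection p hpq.symm)) (hχ : χ ∈ p) (hχ' : χ' ∈ q) (e a b : L) :
    B (correctedConnection B hpq χ χ' e a) b + B a (correctedConnection B hpq χ χ' e b) = 0 := by
  simp only [correctedConnection, LinearMap.add_apply, map_add]
  linear_combination canonicalConnection_skew hB hinv hP hQ e a b +
    divergenceCorrection_skew hB hP hχ e a b + divergenceCorrection_skew hB hQ hχ' e a b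

theorem correctedConnection_apply_mem (hχ : χ ∈ p) (e : L) {a : L} (ha : a ∈ p) :
    correctedConnection B hpq χ χ' e a ∈ p := by
  simp only [correctedConnection, LinearMap.add_apply,
    divergenceCorrection_apply_of_mem_right (hpq := hpq.symm) e ha, add_zero]
  exact add_mem (canonicalConnection_apply_mem hpq e ha) (divergenceCorrection_apply_mem hχ e a)

theorem correctedConnection_apply_mem_right (hχ' : χ' ∈ q) (e : L) {a : L} (ha : a ∈ q) :
    correctedConnection B hpq χ χ' e a ∈ q := by
  simp only [correctedConnection, LinearMap.add_apply,
    divergenceCorrection_apply_of_mem_right (hpq := hpq) e ha, add_zero]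
  exact add_mem (canonicalConnection_apply_mem_right hpq e ha)
    (divergenceCorrection_apply_mem hχ' e a)

theorem correctedConnection_torsion [CharZero K] (hB : ∀ x y, B x y = B y x)
    (hinv : ∀ x y z, B ⁅x, y⁆ z = B x ⁅y, z⁆) (hP : B.IsSelfAdjoint (p.projection q hpq))
    (hQ : B.IsSelfAdjoint (q.projection p hpq.symm)) (hχ : χ ∈ p) (hχ' : χ' ∈ q)
    (e₁ e₂ e₃ : L) :
    B (correctedConnection B hpq χ χ' e₁ e₂ - correctedConnection B hpq χ χ' e₂ e₁) e₃ +
      B (correctedConnection B hpq χ χ' e₃ e₁) e₂ = B ⁅e₁, e₂⁆ e₃ := by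
  have h₀ := canonicalConnection_torsion hB hinv hP hQ e₁ e₂ e₃
  have h₁ := divergenceCorrection_torsion hB hP hχ e₁ e₂ e₃
  have h₂ := divergenceCorrection_torsion hB hQ hχ' e₁ e₂ e₃
  simp only [correctedConnection, LinearMap.add_apply, map_sub, map_add,
    LinearMap.sub_apply] at h₀ h₁ h₂ ⊢
  linear_combination h₀ + h₁ + h₂

theorem trace_correctedConnection_flip [FiniteDimensional K L] (e : L) :
    LinearMap.trace K L ((correctedConnection B hpq χ χ').flip e) =
      LinearMap.trace K L ((canonicalConnection hpq).flip e) +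
        LinearMap.trace K L ((divergenceCorrection B hpq χ).flip e) +
        LinearMap.trace K L ((divergenceCorrection B hpq.symm χ').flip e) := by
  rw [← map_add, ← map_add]
  rfl

end CanonicalConnection

theorem statement_14_general
    {𝔤 : Type*} [LieRing 𝔤] [LieAlgebra ℝ 𝔤] [FiniteDimensional ℝ 𝔤]
    (B : 𝔤 →ₗ[ℝ] 𝔤 →ₗ[ℝ] ℝ)
    (hB_symm : ∀ x y, B x y = B y x)
    (hB_nondeg : ∀ x, (∀ y, B x y = 0) → x = 0)
    (hB_inv : ∀ x y z, B ⁅x, y⁆ z = B x ⁅y, z⁆)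
    (Vp Vm : Submodule ℝ 𝔤)
    (hcompl : IsCompl Vp Vm)
    (horth : ∀ x ∈ Vp, ∀ y ∈ Vm, B x y = 0)
    (hdimp : 2 ≤ Module.finrank ℝ Vp)
    (hdimm : 2 ≤ Module.finrank ℝ Vm)
    (ξ : 𝔤 →ₗ[ℝ] ℝ) :
    ∃ D : 𝔤 →ₗ[ℝ] 𝔤 →ₗ[ℝ] 𝔤,
      (∀ e a b, B (D e a) b + B a (D e b) = 0) ∧
      (∀ e, ∀ x ∈ Vp, D e x ∈ Vp) ∧ (∀ e, ∀ x ∈ Vm, D e x ∈ Vm) ∧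
      (∀ e₁ e₂ e₃, B (D e₁ e₂ - D e₂ e₁ - ⁅e₁, e₂⁆) e₃ + B (D e₃ e₁) e₂ = 0) ∧
      (∀ e, LinearMap.trace ℝ 𝔤 (D.flip e) = ξ e) := by
  have horth' : ∀ x ∈ Vm, ∀ y ∈ Vp, B x y = 0 := fun x hx y hy =>
    (hB_symm x y).trans (horth y hy x hx)
  have hP := isSelfAdjoint_projection hB_symm hcompl horth
  have hQ := isSelfAdjoint_projection hB_symm hcompl.symm horth'
  let μ := ξ - LinearMap.trace ℝ 𝔤 ∘ₗ (canonicalConnection hcompl).flip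
  obtain ⟨χ, hχ, hdivχ⟩ := exists_trace_divergenceCorrection_flip_eq hB_nondeg hcompl horth
    (by norm_cast; omega) μ
  obtain ⟨χ', hχ', hdivχ'⟩ := exists_trace_divergenceCorrection_flip_eq hB_nondeg hcompl.symm
    horth' (by norm_cast; omega) μ
  refine ⟨correctedConnection B hcompl χ χ',
    correctedConnection_skew hB_symm hB_inv hP hQ hχ hχ',
    fun e _ => correctedConnection_apply_mem hχ e,
    fun e _ => correctedConnection_apply_mem_right hχ' e, fun e₁ e₂ e₃ => ?_, fun e => ?_⟩
  · rw [map_sub, LinearMap.sub_apply]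
    linear_combination correctedConnection_torsion hB_symm hB_inv hP hQ hχ hχ' e₁ e₂ e₃
  · rw [trace_correctedConnection_flip, hdivχ, hdivχ', add_assoc, ← map_add,
      projection_add_projection_eq_self]
    simp only [μ, LinearMap.sub_apply, LinearMap.comp_apply]
    ring

/-- On a quadratic Lie algebra with generalized metric `𝔤 = Vp ⊕ Vm`,
`dim Vp ≥ 2` and `dim Vm ≥ 2`, for every linear functional `ξ` there is a torsion-free
`Vp`-compatible generalized connection `D` with divergence `div_D = ξ`. -/
theorem statement_14
    {𝔤 : Type*} [LieRing 𝔤] [LieAlgebra ℝ 𝔤] [FiniteDimensional ℝ 𝔤]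
    (B : 𝔤 →ₗ[ℝ] 𝔤 →ₗ[ℝ] ℝ)
    (hB_symm : ∀ x y, B x y = B y x)
    (hB_nondeg : ∀ x, (∀ y, B x y = 0) → x = 0)
    (hB_inv : ∀ x y z, B ⁅x, y⁆ z = B x ⁅y, z⁆)
    (Vp Vm : Submodule ℝ 𝔤)
    (hcompl : IsCompl Vp Vm)
    (horth : ∀ x ∈ Vp, ∀ y ∈ Vm, B x y = 0)
    (hndp : ∀ x ∈ Vp, (∀ y ∈ Vp, B x y = 0) → x = 0)
    (hdimp : 2 ≤ Module.finrank ℝ Vp)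
    (hdimm : 2 ≤ Module.finrank ℝ Vm)
    (ξ : 𝔤 →ₗ[ℝ] ℝ) :
    ∃ D : 𝔤 →ₗ[ℝ] 𝔤 →ₗ[ℝ] 𝔤,
      (∀ e a b, B (D e a) b + B a (D e b) = 0) ∧
      (∀ e, ∀ x ∈ Vp, D e x ∈ Vp) ∧ (∀ e, ∀ x ∈ Vm, D e x ∈ Vm) ∧
      (∀ e₁ e₂ e₃, B (D e₁ e₂ - D e₂ e₁ - ⁅e₁, e₂⁆) e₃ + B (D e₃ e₁) e₂ = 0) ∧
      (∀ e, LinearMap.trace ℝ 𝔤 (D.flip e) = ξ e) :=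
  statement_14_general B hB_symm hB_nondeg hB_inv Vp Vm hcompl horth hdimp hdimm ξ
end

section
/- Let 𝔤 be a quadratic Lie algebra with generalized metric 𝔤 = V₊ ⊕ V₋. Let D be a torsion-free V₊-compatible generalized connection and D' a V₊-compatible generalized connection whose torsion is of pure type (T_{D'}(a,b,c) = 0 whenever a, b, c are not all in V₊ nor all in V₋) and whose divergence equals that of D, div_{D'} = div_D. Then χ = D' − D satisfies: ⟨χ_a b, c⟩ = 0 whenever a, b, c are not all in V₊ nor all in V₋, and its contraction vanishes, Σ_i χ_{e_i} ẽ_i = 0 for a (hence any) basis {e_i} of 𝔤 with ⟨·,·⟩-dual basis {ẽ_i}. -/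
/-!
Write `χ = D' - D`. Both connections are `⟨·,·⟩`-skew and preserve `V₊` and `V₋`, so `χ` does
too. The torsions differ by `⟨χ_a b, c⟩ - ⟨χ_b a, c⟩ + ⟨χ_c a, b⟩`, the brackets cancelling. For
`a ∈ V₋` and `b, c ∈ V₊` the last two terms pair `V₋` with `V₊` and vanish, so `⟨χ_a b, c⟩` is a
difference of torsions, both zero; the other mixed types vanish by compatibility alone. For the
contraction, skewness gives `⟨e, Σ χ_{e_i} ẽ_i⟩ = -Σ ⟨χ_{e_i} e, ẽ_i⟩ = -tr(a ↦ χ_a e)`, which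
is `div_{D'} e - div_D e = 0`; nondegeneracy finishes.
-/

namespace GeneralizedConnection

section Lie

variable {R 𝔤 : Type*} [CommRing R] [LieRing 𝔤] [LieAlgebra R 𝔤] (B : 𝔤 →ₗ[R] 𝔤 →ₗ[R] R)

def torsion (D : 𝔤 →ₗ[R] 𝔤 →ₗ[R] 𝔤) (a b c : 𝔤) : R :=
  B (D a b - D b a - ⁅a, b⁆) c + B (D c a) b

theorem torsion_sub_torsion (D D' : 𝔤 →ₗ[R] 𝔤 →ₗ[R] 𝔤) (a b c : 𝔤) :
    torsion B D' a b c - torsion B D a b c =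
      B ((D' - D) a b) c - B ((D' - D) b a) c + B ((D' - D) c a) b := by
  simp only [torsion, LinearMap.sub_apply, map_sub]
  ring

theorem apply_sub_eq_zero_of_torsion_eq_zero
    (hB_symm : ∀ x y, B x y = B y x) {V W : Submodule R 𝔤}
    (horth : ∀ x ∈ V, ∀ y ∈ W, B x y = 0) {D D' : 𝔤 →ₗ[R] 𝔤 →ₗ[R] 𝔤}
    (hχ : ∀ e, ∀ x ∈ W, (D' - D) e x ∈ W) {a b c : 𝔤} (ha : a ∈ W) (hb : b ∈ V) (hc : c ∈ V)
    (hT : torsion B D a b c = 0) (hT' : torsion B D' a b c = 0) :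
    B ((D' - D) a b) c = 0 := by
  have hba : B ((D' - D) b a) c = 0 := by rw [hB_symm]; exact horth c hc _ (hχ b a ha)
  have hca : B ((D' - D) c a) b = 0 := by rw [hB_symm]; exact horth b hb _ (hχ c a ha)
  linear_combination -torsion_sub_torsion B D D' a b c + hba - hca + hT' - hT

end Lie

variable {R 𝔤 ι : Type*} [CommRing R] [AddCommGroup 𝔤] [Module R 𝔤] (B : 𝔤 →ₗ[R] 𝔤 →ₗ[R] R)

theorem skew_sub {D D' : 𝔤 →ₗ[R] 𝔤 →ₗ[R] 𝔤}
    (hD : ∀ e a b, B (D e a) b + B a (D e b) = 0)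
    (hD' : ∀ e a b, B (D' e a) b + B a (D' e b) = 0) (e a b : 𝔤) :
    B ((D' - D) e a) b + B a ((D' - D) e b) = 0 := by
  simp only [LinearMap.sub_apply, map_sub]
  linear_combination hD' e a b - hD e a b

theorem sub_apply_mem {V : Submodule R 𝔤} {D D' : 𝔤 →ₗ[R] 𝔤 →ₗ[R] 𝔤}
    (hD : ∀ e, ∀ x ∈ V, D e x ∈ V) (hD' : ∀ e, ∀ x ∈ V, D' e x ∈ V) (e : 𝔤) {x : 𝔤}
    (hx : x ∈ V) : (D' - D) e x ∈ V :=
  V.sub_mem (hD' e x hx) (hD e x hx)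

theorem apply_dual_eq_repr [DecidableEq ι] [Fintype ι] (bb : Module.Basis ι R 𝔤) {d : ι → 𝔤}
    (hd : ∀ i j, B (bb i) (d j) = if i = j then 1 else 0) (x : 𝔤) (i : ι) :
    B x (d i) = bb.repr x i := by
  conv_lhs => rw [← bb.sum_repr x]
  simp only [map_sum, map_smul, LinearMap.sum_apply, LinearMap.smul_apply, hd, smul_eq_mul,
    mul_ite, mul_one, mul_zero, Finset.sum_ite_eq', Finset.mem_univ, if_true]

theorem trace_eq_sum_apply_dual [DecidableEq ι] [Fintype ι] (bb : Module.Basis ι R 𝔤)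
    {d : ι → 𝔤} (hd : ∀ i j, B (bb i) (d j) = if i = j then 1 else 0) (f : 𝔤 →ₗ[R] 𝔤) :
    LinearMap.trace R 𝔤 f = ∑ i, B (f (bb i)) (d i) := by
  simp [LinearMap.trace_eq_matrix_trace R bb, Matrix.trace, LinearMap.toMatrix_apply,
    apply_dual_eq_repr B bb hd]

theorem sum_apply_dual_eq_zero [DecidableEq ι] [Fintype ι] (hB_symm : ∀ x y, B x y = B y x)
    (hB_nondeg : ∀ x, (∀ y, B x y = 0) → x = 0) {χ : 𝔤 →ₗ[R] 𝔤 →ₗ[R] 𝔤}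
    (hskew : ∀ e a b, B (χ e a) b + B a (χ e b) = 0)
    (hdiv : ∀ e, LinearMap.trace R 𝔤 (χ.flip e) = 0) (bb : Module.Basis ι R 𝔤) {d : ι → 𝔤}
    (hd : ∀ i j, B (bb i) (d j) = if i = j then 1 else 0) :
    ∑ i, χ (bb i) (d i) = 0 := by
  refine hB_nondeg _ fun e ↦ ?_
  calc B (∑ i, χ (bb i) (d i)) e = ∑ i, B e (χ (bb i) (d i)) := by
        rw [hB_symm, map_sum]
    _ = -∑ i, B (χ.flip e (bb i)) (d i) := by
        rw [← Finset.sum_neg_distrib]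
        exact Finset.sum_congr rfl fun i _ ↦ eq_neg_of_add_eq_zero_right (hskew (bb i) e (d i))
    _ = 0 := by rw [← trace_eq_sum_apply_dual B bb hd, hdiv, neg_zero]

end GeneralizedConnection

open GeneralizedConnection in
theorem statement_15_general
    {𝔤 : Type*} [LieRing 𝔤] [LieAlgebra ℝ 𝔤]
    (B : 𝔤 →ₗ[ℝ] 𝔤 →ₗ[ℝ] ℝ)
    (hB_symm : ∀ x y, B x y = B y x)
    (hB_nondeg : ∀ x, (∀ y, B x y = 0) → x = 0)
    (Vp Vm : Submodule ℝ 𝔤)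
    (horth : ∀ x ∈ Vp, ∀ y ∈ Vm, B x y = 0)
    (D D' : 𝔤 →ₗ[ℝ] 𝔤 →ₗ[ℝ] 𝔤)
    (hD_skew : ∀ e a b, B (D e a) b + B a (D e b) = 0)
    (hD'_skew : ∀ e a b, B (D' e a) b + B a (D' e b) = 0)
    (hD_compp : ∀ e, ∀ x ∈ Vp, D e x ∈ Vp) (hD_compm : ∀ e, ∀ x ∈ Vm, D e x ∈ Vm)
    (hD'_compp : ∀ e, ∀ x ∈ Vp, D' e x ∈ Vp) (hD'_compm : ∀ e, ∀ x ∈ Vm, D' e x ∈ Vm)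
    (hD_tf : ∀ e₁ e₂ e₃, B (D e₁ e₂ - D e₂ e₁ - ⁅e₁, e₂⁆) e₃ + B (D e₃ e₁) e₂ = 0)
    (hT'_pure : ∀ a b c : 𝔤,
      (a ∈ Vp ∨ a ∈ Vm) → (b ∈ Vp ∨ b ∈ Vm) → (c ∈ Vp ∨ c ∈ Vm) →
      ¬(a ∈ Vp ∧ b ∈ Vp ∧ c ∈ Vp) → ¬(a ∈ Vm ∧ b ∈ Vm ∧ c ∈ Vm) →
      B (D' a b - D' b a - ⁅a, b⁆) c + B (D' c a) b = 0)
    (hdiv : ∀ e, LinearMap.trace ℝ 𝔤 (D'.flip e) = LinearMap.trace ℝ 𝔤 (D.flip e))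
    {ι : Type*} [Fintype ι] [DecidableEq ι]
    (bb : Module.Basis ι ℝ 𝔤) (d : ι → 𝔤)
    (hd : ∀ i j, B (bb i) (d j) = if i = j then 1 else 0) :
    (∀ a b c : 𝔤,
      (a ∈ Vp ∨ a ∈ Vm) → (b ∈ Vp ∨ b ∈ Vm) → (c ∈ Vp ∨ c ∈ Vm) →
      ¬(a ∈ Vp ∧ b ∈ Vp ∧ c ∈ Vp) → ¬(a ∈ Vm ∧ b ∈ Vm ∧ c ∈ Vm) →
      B ((D' - D) a b) c = 0) ∧
    (∑ i, (D' - D) (bb i) (d i) = 0) := by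
  have hχp := sub_apply_mem hD_compp hD'_compp
  have hχm := sub_apply_mem hD_compm hD'_compm
  have horth' : ∀ x ∈ Vm, ∀ y ∈ Vp, B x y = 0 := fun x hx y hy ↦ hB_symm x y ▸ horth y hy x hx
  refine ⟨fun a b c ha hb hc hnp hnm ↦ ?_, ?_⟩
  · have hT' := hT'_pure a b c ha hb hc hnp hnm
    rcases hb with hb | hb <;> rcases hc with hc | hc
    · have ha : a ∈ Vm := ha.resolve_left fun ha ↦ hnp ⟨ha, hb, hc⟩
      exact apply_sub_eq_zero_of_torsion_eq_zero B hB_symm horth hχm ha hb hc (hD_tf a b c) hT'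
    · exact horth _ (hχp a hb) _ hc
    · exact horth' _ (hχm a hb) _ hc
    · have ha : a ∈ Vp := ha.resolve_right fun ha ↦ hnm ⟨ha, hb, hc⟩
      exact apply_sub_eq_zero_of_torsion_eq_zero B hB_symm horth' hχp ha hb hc (hD_tf a b c) hT'
  · refine sum_apply_dual_eq_zero B hB_symm hB_nondeg (skew_sub B hD_skew hD'_skew)
      (fun e ↦ ?_) bb hd
    have hflip : (D' - D).flip e = D'.flip e - D.flip e := rfl
    rw [hflip, map_sub, hdiv, sub_self]

/-- On a quadratic Lie algebra with generalized metric `𝔤 = Vp ⊕ Vm`, if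
`D` is torsion-free `Vp`-compatible and `D'` is `Vp`-compatible with pure-type torsion
and the same divergence, then `χ = D' − D` satisfies `⟨χ_a b, c⟩ = 0` whenever `a,b,c`
are not all in `Vp` nor all in `Vm`, and its contraction vanishes:
`Σ_i χ_{e_i} ẽ_i = 0` for any basis `{e_i}` with `⟨·,·⟩`-dual basis `{ẽ_i}`. -/
theorem statement_15
    {𝔤 : Type*} [LieRing 𝔤] [LieAlgebra ℝ 𝔤] [FiniteDimensional ℝ 𝔤]
    (B : 𝔤 →ₗ[ℝ] 𝔤 →ₗ[ℝ] ℝ)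
    (hB_symm : ∀ x y, B x y = B y x)
    (hB_nondeg : ∀ x, (∀ y, B x y = 0) → x = 0)
    (hB_inv : ∀ x y z, B ⁅x, y⁆ z = B x ⁅y, z⁆)
    (Vp Vm : Submodule ℝ 𝔤)
    (hcompl : IsCompl Vp Vm)
    (horth : ∀ x ∈ Vp, ∀ y ∈ Vm, B x y = 0)
    (hndp : ∀ x ∈ Vp, (∀ y ∈ Vp, B x y = 0) → x = 0)
    (D D' : 𝔤 →ₗ[ℝ] 𝔤 →ₗ[ℝ] 𝔤)
    (hD_skew : ∀ e a b, B (D e a) b + B a (D e b) = 0)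
    (hD'_skew : ∀ e a b, B (D' e a) b + B a (D' e b) = 0)
    (hD_compp : ∀ e, ∀ x ∈ Vp, D e x ∈ Vp) (hD_compm : ∀ e, ∀ x ∈ Vm, D e x ∈ Vm)
    (hD'_compp : ∀ e, ∀ x ∈ Vp, D' e x ∈ Vp) (hD'_compm : ∀ e, ∀ x ∈ Vm, D' e x ∈ Vm)
    (hD_tf : ∀ e₁ e₂ e₃, B (D e₁ e₂ - D e₂ e₁ - ⁅e₁, e₂⁆) e₃ + B (D e₃ e₁) e₂ = 0)
    (hT'_pure : ∀ a b c : 𝔤,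
      (a ∈ Vp ∨ a ∈ Vm) → (b ∈ Vp ∨ b ∈ Vm) → (c ∈ Vp ∨ c ∈ Vm) →
      ¬(a ∈ Vp ∧ b ∈ Vp ∧ c ∈ Vp) → ¬(a ∈ Vm ∧ b ∈ Vm ∧ c ∈ Vm) →
      B (D' a b - D' b a - ⁅a, b⁆) c + B (D' c a) b = 0)
    (hdiv : ∀ e, LinearMap.trace ℝ 𝔤 (D'.flip e) = LinearMap.trace ℝ 𝔤 (D.flip e))
    {ι : Type*} [Fintype ι] [DecidableEq ι]
    (bb : Module.Basis ι ℝ 𝔤) (d : ι → 𝔤)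
    (hd : ∀ i j, B (bb i) (d j) = if i = j then 1 else 0) :
    (∀ a b c : 𝔤,
      (a ∈ Vp ∨ a ∈ Vm) → (b ∈ Vp ∨ b ∈ Vm) → (c ∈ Vp ∨ c ∈ Vm) →
      ¬(a ∈ Vp ∧ b ∈ Vp ∧ c ∈ Vp) → ¬(a ∈ Vm ∧ b ∈ Vm ∧ c ∈ Vm) →
      B ((D' - D) a b) c = 0) ∧
    (∑ i, (D' - D) (bb i) (d i) = 0) :=
  statement_15_general B hB_symm hB_nondeg Vp Vm horth D D' hD_skew hD'_skew hD_compp hD_compm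
    hD'_compp hD'_compm hD_tf hT'_pure hdiv bb d hd
end

section
/- (Redundancy of the Courant algebroid anchor axiom.) Let R be a commutative ring, A a commutative R-algebra, and E an A-module which is faithful (if f·x = 0 for all x ∈ E then f = 0). Suppose given an R-bilinear bracket [·,·]: E × E → E and an R-linear map π: E → Der_R(A) such that for all e₁, e₂, e₃ ∈ E and f ∈ A: (C1) [e₁,[e₂,e₃]] = [[e₁,e₂],e₃] + [e₂,[e₁,e₃]], and (C3) [e₁, f·e₂] = (π(e₁) f)·e₂ + f·[e₁,e₂]. Then π is a bracket homomorphism: π([e₁,e₂]) = π(e₁)∘π(e₂) − π(e₂)∘π(e₁), the commutator of derivations. -/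
/-- Redundancy of the Courant algebroid anchor axiom: If `E` is a
faithful `A`-module with an `R`-bilinear bracket and an `R`-linear anchor
`π : E → Der_R(A)` satisfying the Leibniz/Jacobi identity (C1) and the Leibniz rule
(C3), then `π` is a bracket homomorphism:
`π([e₁,e₂]) = π(e₁)∘π(e₂) − π(e₂)∘π(e₁)`. -/
theorem statement_17
    {R A : Type*} [CommRing R] [CommRing A] [Algebra R A]
    {E : Type*} [AddCommGroup E] [Module R E] [Module A E] [IsScalarTower R A E]
    (hfaithful : ∀ f : A, (∀ x : E, f • x = 0) → f = 0)
    (br : E →ₗ[R] E →ₗ[R] E)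
    (π : E →ₗ[R] Derivation R A A)
    (hC1 : ∀ e₁ e₂ e₃, br e₁ (br e₂ e₃) = br (br e₁ e₂) e₃ + br e₂ (br e₁ e₃))
    (hC3 : ∀ (e₁ : E) (f : A) (e₂ : E),
      br e₁ (f • e₂) = (π e₁ f) • e₂ + f • br e₁ e₂) :
    ∀ (e₁ e₂ : E) (f : A),
      π (br e₁ e₂) f = π e₁ (π e₂ f) - π e₂ (π e₁ f) := by
  intro e₁ e₂ f
  have key : ∀ x : E,
      (π (br e₁ e₂) f - (π e₁ (π e₂ f) - π e₂ (π e₁ f))) • x = 0 := by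
    intro x
    have h := hC1 e₁ e₂ (f • x)
    rw [hC3 e₂ f x, map_add, hC3 e₁ (π e₂ f) x, hC3 e₁ f (br e₂ x),
        hC3 (br e₁ e₂) f x, hC3 e₁ f x, map_add, hC3 e₂ (π e₁ f) x,
        hC3 e₂ f (br e₁ x), hC1 e₁ e₂ x] at h
    rw [sub_smul, sub_smul, smul_add] at *
    linear_combination (norm := module) -h
  exact sub_eq_zero.mp (hfaithful _ key)
end
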